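/- arXiv:2109.02100 — 3 statements merged into one kernel-verified Lean document; each statement's English description precedes it below -/
import Mathlib

section
/- For σ > 0, α > 0, g ∈ ℝ, the function π(x) = sigmoid((g + α/2 − x)/σ) − sigmoid((g − α/2 − x)/σ) is strictly increasing on (−∞, g]. -/
noncomputable def sigmoid (t : ℝ) : ℝ := 1 / (1 + Real.exp (-t))

theorem stmt_7 (σ α g : ℝ) (hσ : 0 < σ) (hα : 0 < α)
    (π : ℝ → ℝ)
    (hπ : ∀ x, π x = sigmoid ((g + α / 2 - x) / σ) - sigmoid ((g - α / 2 - x) / σ)) :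
    StrictMonoOn π (Set.Iic g) := by
  intro x hx y hy hxy
  simp only [Set.mem_Iic] at hx hy
  rw [hπ, hπ]
  simp only [sigmoid]
  have hσ' : σ ≠ 0 := hσ.ne'
  set c := α / (2 * σ) with hc
  have hcpos : 0 < c := by positivity
  have hax : (g + α/2 - x)/σ = (g - x)/σ + c := by rw [hc]; field_simp; ring
  have hbx : (g - α/2 - x)/σ = (g - x)/σ - c := by rw [hc]; field_simp; ring
  have hay : (g + α/2 - y)/σ = (g - y)/σ + c := by rw [hc]; field_simp; ring
  have hby : (g - α/2 - y)/σ = (g - y)/σ - c := by rw [hc]; field_simp; ring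
  rw [hax, hbx, hay, hby]
  set sx := Real.exp (-((g - x)/σ)) with hsx
  set sy := Real.exp (-((g - y)/σ)) with hsy
  set p := Real.exp (-c) with hp
  set q := Real.exp c with hq
  have e1 : Real.exp (-((g - x)/σ + c)) = sx * p := by rw [neg_add, Real.exp_add]
  have e2 : Real.exp (-((g - x)/σ - c)) = sx * q := by
    rw [neg_sub, sub_eq_neg_add, Real.exp_add]
  have e3 : Real.exp (-((g - y)/σ + c)) = sy * p := by rw [neg_add, Real.exp_add]
  have e4 : Real.exp (-((g - y)/σ - c)) = sy * q := by
    rw [neg_sub, sub_eq_neg_add, Real.exp_add]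
  rw [e1, e2, e3, e4]
  have hsxy : sx < sy := by
    apply Real.exp_lt_exp.2
    rw [neg_lt_neg_iff, div_lt_div_iff_of_pos_right hσ]
    linarith
  have hsy1 : sy ≤ 1 := by
    rw [hsy, Real.exp_le_one_iff, neg_nonpos]
    exact div_nonneg (by linarith) hσ.le
  have hpq : p * q = 1 := by rw [hp, hq, ← Real.exp_add]; simp
  have hppos : 0 < p := Real.exp_pos _
  have hqpos : 0 < q := Real.exp_pos _
  have hplt : p < q := by
    apply Real.exp_lt_exp.2; linarith
  have hsxpos : 0 < sx := Real.exp_pos _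
  have hsypos : 0 < sy := Real.exp_pos _
  have d1 : 0 < 1 + sx * p := by positivity
  have d2 : 0 < 1 + sx * q := by positivity
  have d3 : 0 < 1 + sy * p := by positivity
  have d4 : 0 < 1 + sy * q := by positivity
  rw [div_sub_div _ _ d1.ne' d2.ne', div_sub_div _ _ d3.ne' d4.ne',
    div_lt_div_iff₀ (by positivity) (by positivity)]
  have key : 0 < (sy - sx) * (1 - sx * sy) * (q - p) := by
    apply mul_pos (mul_pos (by linarith) _) (by linarith)
    nlinarith
  have main : sy * (q - p) * ((1 + sx*p)*(1 + sx*q)) - sx * (q - p) * ((1 + sy*p)*(1 + sy*q))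
      = (sy - sx) * (1 - sx*sy) * (q - p) := by
    linear_combination ((q - p) * sx * sy * (sx - sy)) * hpq
  linarith [key, main]
end

section
/- Fix σ > 0, α > 0, an integer b ≥ 1, and grids g_i = α·(i − 2^{b−1}) for i ∈ {0, …, 2^b − 1}. For x ∈ ℝ with g_j − α/2 < x < g_j + α/2 for some index j, the value π_j(x) = sigmoid((g_j + α/2 − x)/σ) − sigmoid((g_j − α/2 − x)/σ) is strictly greater than π_i(x) for every i ≠ j. -/
lemma sigmoid_eq (t : ℝ) : sigmoid t = Real.exp t / (Real.exp t + 1) := by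
  unfold sigmoid
  rw [Real.exp_neg]
  have h : Real.exp t > 0 := Real.exp_pos t
  field_simp

lemma key (c t₁ t₂ : ℝ) (hc : 0 < c)
    (h : 0 < (Real.exp t₂ - Real.exp t₁) * (Real.exp (c + t₁ + t₂) - 1)) :
    sigmoid (t₂ + c) - sigmoid t₂ < sigmoid (t₁ + c) - sigmoid t₁ := by
  have ha := Real.exp_pos t₁
  have hb := Real.exp_pos t₂
  have hE := Real.exp_pos c
  have hE1 : 1 < Real.exp c := by
    rw [← Real.exp_zero]; exact Real.exp_lt_exp.mpr hc
  set a := Real.exp t₁ with hadef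
  set b := Real.exp t₂ with hbdef
  set E := Real.exp c with hEdef
  have hh : 0 < (b - a) * (a * b * E - 1) := by
    have : Real.exp (c + t₁ + t₂) = a * b * E := by
      rw [Real.exp_add, Real.exp_add]; ring
    rw [this] at h
    exact h
  have e1 : sigmoid (t₂ + c) - sigmoid t₂ = b * (E - 1) / ((b * E + 1) * (b + 1)) := by
    rw [sigmoid_eq, sigmoid_eq, Real.exp_add, ← hbdef, ← hEdef]
    have d1 : b * E + 1 > 0 := by positivity
    have d2 : b + 1 > 0 := by positivity
    field_simp
    ring
  have e2 : sigmoid (t₁ + c) - sigmoid t₁ = a * (E - 1) / ((a * E + 1) * (a + 1)) := by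
    rw [sigmoid_eq, sigmoid_eq, Real.exp_add, ← hadef, ← hEdef]
    have d1 : a * E + 1 > 0 := by positivity
    have d2 : a + 1 > 0 := by positivity
    field_simp
    ring
  rw [e1, e2]
  have d1 : (0:ℝ) < (b * E + 1) * (b + 1) := by positivity
  have d2 : (0:ℝ) < (a * E + 1) * (a + 1) := by positivity
  rw [div_lt_div_iff₀ d1 d2]
  nlinarith [mul_pos (sub_pos.mpr hE1) hh]

theorem stmt_10 (σ α x : ℝ) (hσ : 0 < σ) (hα : 0 < α) (b : ℕ) (hb : 1 ≤ b)
    (g : ℕ → ℝ) (hg : ∀ i, g i = α * ((i : ℝ) - 2 ^ (b - 1)))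
    (π : ℕ → ℝ)
    (hπ : ∀ i, π i = sigmoid ((g i + α / 2 - x) / σ) - sigmoid ((g i - α / 2 - x) / σ))
    (j : ℕ) (hj : j < 2 ^ b) (hx1 : g j - α / 2 < x) (hx2 : x < g j + α / 2) :
    ∀ i < 2 ^ b, i ≠ j → π i < π j := by
  intro i _ hij
  set c : ℝ := α / σ with hcdef
  have hc : 0 < c := div_pos hα hσ
  set t : ℕ → ℝ := fun k => (g k - α / 2 - x) / σ with htdef
  have hπ' : ∀ k, π k = sigmoid (t k + c) - sigmoid (t k) := by
    intro k
    rw [hπ]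
    congr 2
    simp only [htdef, hcdef]
    field_simp
    ring
  have htdiff : ∀ k, t k = t j + c * ((k : ℝ) - (j : ℝ)) := by
    intro k
    simp only [htdef, hcdef, hg]
    field_simp
    ring
  -- bounds on t j
  have htj_ub : t j < 0 := by
    simp only [htdef]
    apply div_neg_of_neg_of_pos _ hσ
    linarith
  have htj_lb : -c < t j := by
    simp only [htdef, hcdef]
    rw [show -(α / σ) = (-α) / σ by ring]
    gcongr
    linarith
  rw [hπ' i, hπ' j]
  apply key c (t j) (t i) hc
  rcases lt_or_gt_of_ne hij with hlt | hgt
  · -- i < j : t i ≤ t j - c < t j, and c + t j + t i < 0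
    have hk : (i : ℝ) - (j : ℝ) ≤ -1 := by
      have : (i : ℝ) + 1 ≤ (j : ℝ) := by exact_mod_cast hlt
      linarith
    have hti : t i ≤ t j - c := by
      rw [htdiff i]; nlinarith
    have h1 : Real.exp (t i) - Real.exp (t j) < 0 := by
      have := Real.exp_lt_exp.mpr (show t i < t j by linarith)
      linarith
    have h2 : Real.exp (c + t j + t i) - 1 < 0 := by
      have : c + t j + t i < 0 := by linarith
      have := Real.exp_lt_exp.mpr this
      rw [Real.exp_zero] at this
      linarith
    exact mul_pos_of_neg_of_neg h1 h2
  · -- i > j : t i ≥ t j + c > t j, and c + t j + t i > 0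
    have hk : (1 : ℝ) ≤ (i : ℝ) - (j : ℝ) := by
      have : (j : ℝ) + 1 ≤ (i : ℝ) := by exact_mod_cast hgt
      linarith
    have hti : t j + c ≤ t i := by
      rw [htdiff i]; nlinarith
    have h1 : 0 < Real.exp (t i) - Real.exp (t j) := by
      have := Real.exp_lt_exp.mpr (show t j < t i by linarith)
      linarith
    have h2 : 0 < Real.exp (c + t j + t i) - 1 := by
      have : 0 < c + t j + t i := by linarith
      have := Real.exp_lt_exp.mpr this
      rw [Real.exp_zero] at this
      linarith
    exact mul_pos h1 h2
end

section
/- Let τ' > 0, Π ∈ (0,1), γ < 0 < ζ. If U is uniformly distributed on (0,1), S = sigmoid((log U − log(1−U) + log(Π/(1−Π)))/τ'), S̄ = S(ζ−γ) + γ, and Z = min(max(S̄,0),1), then P(Z > 0) = sigmoid(log(Π/(1−Π)) − τ'·log(−γ/ζ)). -/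
lemma lt_min_max_iff {α : Type*} [LinearOrder α] {a b x : α} (hab : a < b) :
    a < min (max x a) b ↔ a < x := by
  simp [hab]

lemma sigmoid_pos (t : ℝ) : 0 < sigmoid t := by
  unfold sigmoid
  positivity

lemma sigmoid_strictMono : StrictMono sigmoid := by
  intro x y h
  unfold sigmoid
  gcongr

lemma one_sub_sigmoid (t : ℝ) : 1 - sigmoid t = sigmoid (-t) := by
  unfold sigmoid
  rw [neg_neg, Real.exp_neg]
  field_simp
  ring

lemma sigmoid_log {x : ℝ} (hx : 0 < x) : sigmoid (Real.log x) = x / (1 + x) := by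
  unfold sigmoid
  rw [Real.exp_neg, Real.exp_log hx]
  field_simp
  ring

lemma sigmoid_log_sub_log_one_sub {u : ℝ} (hu : u ∈ Set.Ioo (0 : ℝ) 1) :
    sigmoid (Real.log u - Real.log (1 - u)) = u := by
  obtain ⟨hu0, hu1⟩ := hu
  have h1u : 0 < 1 - u := by linarith
  rw [← Real.log_div hu0.ne' h1u.ne', sigmoid_log (by positivity)]
  field_simp
  ring

lemma sigmoid_lt_iff_lt_log_sub_log_one_sub {t u : ℝ} (hu : u ∈ Set.Ioo (0 : ℝ) 1) :
    sigmoid t < u ↔ t < Real.log u - Real.log (1 - u) := by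
  conv_lhs => rw [← sigmoid_log_sub_log_one_sub hu]
  exact sigmoid_strictMono.lt_iff_lt

lemma zero_lt_mul_sub_add_iff_sigmoid_log_lt {γ ζ : ℝ} (hγ : γ < 0) (hζ : 0 < ζ) (s : ℝ) :
    0 < s * (ζ - γ) + γ ↔ sigmoid (Real.log (-γ / ζ)) < s := by
  have hthreshold : sigmoid (Real.log (-γ / ζ)) = -γ / (ζ - γ) := by
    rw [sigmoid_log (div_pos (neg_pos.mpr hγ) hζ)]
    field_simp
    ring
  rw [hthreshold, div_lt_iff₀ (by linarith)]
  constructor <;> intro h <;> linarith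

theorem stmt_15_general (τ' p γ ζ : ℝ) (hτ : 0 < τ')
    (hγ : γ < 0) (hζ : 0 < ζ)
    (S Sbar Z : ℝ → ℝ)
    (hS : ∀ u, S u = sigmoid ((Real.log u - Real.log (1 - u) + Real.log (p / (1 - p))) / τ'))
    (hSbar : ∀ u, Sbar u = S u * (ζ - γ) + γ)
    (hZ : ∀ u, Z u = min (max (Sbar u) 0) 1) :
    MeasureTheory.volume {u : ℝ | u ∈ Set.Ioo (0 : ℝ) 1 ∧ 0 < Z u} =
      ENNReal.ofReal (sigmoid (Real.log (p / (1 - p)) - τ' * Real.log (-γ / ζ))) := by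
  set a := τ' * Real.log (-γ / ζ) - Real.log (p / (1 - p))
  have hgate : ∀ u ∈ Set.Ioo (0 : ℝ) 1, 0 < Z u ↔ sigmoid a < u := fun u hu => by
    rw [hZ, lt_min_max_iff one_pos, hSbar, zero_lt_mul_sub_add_iff_sigmoid_log_lt hγ hζ,
      hS, sigmoid_strictMono.lt_iff_lt, lt_div_iff₀ hτ, sigmoid_lt_iff_lt_log_sub_log_one_sub hu]
    constructor <;> intro h <;> linarith
  have hevent : {u : ℝ | u ∈ Set.Ioo (0 : ℝ) 1 ∧ 0 < Z u} = Set.Ioo (sigmoid a) 1 := by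
    ext u
    refine ⟨fun ⟨hu, hZu⟩ => ⟨(hgate u hu).mp hZu, hu.2⟩, fun ⟨hau, hu1⟩ => ?_⟩
    have hu : u ∈ Set.Ioo (0 : ℝ) 1 := ⟨(sigmoid_pos a).trans hau, hu1⟩
    exact ⟨hu, (hgate u hu).mpr hau⟩
  rw [hevent, Real.volume_Ioo, one_sub_sigmoid, neg_sub]

theorem stmt_15 (τ' p γ ζ : ℝ) (hτ : 0 < τ') (hp : p ∈ Set.Ioo (0 : ℝ) 1)
    (hγ : γ < 0) (hζ : 0 < ζ)
    (S Sbar Z : ℝ → ℝ)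
    (hS : ∀ u, S u = sigmoid ((Real.log u - Real.log (1 - u) + Real.log (p / (1 - p))) / τ'))
    (hSbar : ∀ u, Sbar u = S u * (ζ - γ) + γ)
    (hZ : ∀ u, Z u = min (max (Sbar u) 0) 1) :
    MeasureTheory.volume {u : ℝ | u ∈ Set.Ioo (0 : ℝ) 1 ∧ 0 < Z u} =
      ENNReal.ofReal (sigmoid (Real.log (p / (1 - p)) - τ' * Real.log (-γ / ζ))) :=
  stmt_15_general τ' p γ ζ hτ hγ hζ S Sbar Z hS hSbar hZ
end
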